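/- Let x = (x₁,…,x_d) : ℝ → ℝ^d be a solution of the system x_j'' + n_j² x_j + h_j(x₁,…,x_d) = p_j(t) for j = 1,…,d. Suppose that for every index j ∈ {1,…,d} one has n_j ∈ ℕ and 2(sup h_j − inf h_j) < |∫₀^{2π} p_j(t) e^{i n_j t} dt|. Then for every j ∈ {1,…,d}, x_j(t)² + x_j'(t)² → +∞ as |t| → +∞; in particular every component of every solution is unbounded both in the past and in the future. -/

import Mathlib

open Real Filter MeasureTheory intervalIntegral


lemma abs_cos_int : ∫ s in (0:ℝ)..(2*π), |Real.cos s| = 4 := by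
  have hper : Function.Periodic (fun s => |Real.cos s|) (2*π) :=
    Real.cos_periodic.comp abs
  have h1 : ∫ s in (0:ℝ)..(0+2*π), |Real.cos s| =
      ∫ s in (-(π/2))..(-(π/2)+2*π), |Real.cos s| :=
    hper.intervalIntegral_add_eq 0 (-(π/2))
  rw [zero_add] at h1
  rw [h1]
  have hsplit : ∫ s in (-(π/2))..(-(π/2)+2*π), |Real.cos s| =
      (∫ s in (-(π/2))..(π/2), |Real.cos s|) + ∫ s in (π/2)..(-(π/2)+2*π), |Real.cos s| := by
    rw [integral_add_adjacent_intervals] <;>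
      exact (Real.continuous_cos.abs).intervalIntegrable _ _
  rw [hsplit]
  have e1 : ∫ s in (-(π/2))..(π/2), |Real.cos s| = 2 := by
    have : ∫ s in (-(π/2))..(π/2), |Real.cos s| = ∫ s in (-(π/2))..(π/2), Real.cos s := by
      apply integral_congr
      intro s hs
      rw [Set.uIcc_of_le (by linarith [Real.pi_pos] : -(π/2) ≤ π/2)] at hs
      exact abs_of_nonneg (Real.cos_nonneg_of_mem_Icc hs)
    rw [this, integral_cos]
    simp
    norm_num
  have e2 : ∫ s in (π/2)..(-(π/2)+2*π), |Real.cos s| = 2 := by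
    have : ∫ s in (π/2)..(-(π/2)+2*π), |Real.cos s| =
        ∫ s in (π/2)..(-(π/2)+2*π), -Real.cos s := by
      apply integral_congr
      intro s hs
      rw [Set.uIcc_of_le (by linarith [Real.pi_pos] : π/2 ≤ -(π/2)+2*π)] at hs
      exact abs_of_nonpos (Real.cos_nonpos_of_pi_div_two_le_of_le hs.1 (by linarith [hs.2]))
    rw [this, intervalIntegral.integral_neg, integral_cos]
    have : -(π/2) + 2*π = π + π/2 := by ring
    rw [this, Real.sin_add]
    simp
    norm_num
  rw [e1, e2]; norm_num

lemma abs_cos_shift (φ : ℝ) : ∫ s in (0:ℝ)..(2*π), |Real.cos (s + φ)| = 4 := by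
  have hper : Function.Periodic (fun s => |Real.cos s|) (2*π) :=
    Real.cos_periodic.comp abs
  rw [intervalIntegral.integral_comp_add_right (fun s => |Real.cos s|) φ]
  have h1 : ∫ s in (0+φ)..(2*π+φ), |Real.cos s| = ∫ s in φ..(φ+2*π), |Real.cos s| := by
    rw [zero_add]
    congr 1
    ring
  rw [h1, hper.intervalIntegral_add_eq φ 0, zero_add, abs_cos_int]

lemma abs_cos_per (m : ℕ) (hm : 0 < m) (φ t : ℝ) (K : ℕ) :
    ∫ s in t..(t + (K : ℝ)*(2*π)), |Real.cos ((m:ℝ)*s + φ)| = 4*K := by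
  have hm' : (m:ℝ) ≠ 0 := Nat.cast_ne_zero.2 hm.ne'
  have hcont : Continuous fun s : ℝ => |Real.cos ((m:ℝ)*s + φ)| := by continuity
  have hper : Function.Periodic (fun s => |Real.cos ((m:ℝ)*s + φ)|) (2*π) := by
    intro s
    simp only
    congr 1
    have : (m:ℝ) * (s + 2*π) + φ = ((m:ℝ)*s + φ) + (m:ℤ) * (2*π) := by push_cast; ring
    rw [this, Real.cos_add_int_mul_two_pi]
  have hint : ∀ t₁ t₂, IntervalIntegrable (fun s => |Real.cos ((m:ℝ)*s + φ)|)
      MeasureSpace.volume t₁ t₂ := fun t₁ t₂ => hcont.intervalIntegrable _ _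
  have h1 : ∫ s in t..(t + (K:ℤ) • (2*π)), |Real.cos ((m:ℝ)*s + φ)|
      = (K:ℤ) • ∫ s in t..(t+2*π), |Real.cos ((m:ℝ)*s + φ)| :=
    hper.intervalIntegral_add_zsmul_eq (K:ℤ) t hint
  have h2 : t + (K:ℤ) • (2*π) = t + (K:ℝ)*(2*π) := by rw [zsmul_eq_mul]; push_cast; ring
  rw [h2] at h1
  rw [h1, hper.intervalIntegral_add_eq t 0, zero_add]
  have h3 : ∫ s in (0:ℝ)..(2*π), |Real.cos ((m:ℝ)*s + φ)| = 4 := by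
    have := intervalIntegral.integral_comp_mul_left (fun y => |Real.cos (y + φ)|) hm'
      (a := 0) (b := 2*π)
    rw [this, mul_zero]
    have hper2 : Function.Periodic (fun y => |Real.cos (y + φ)|) (2*π) := by
      intro s
      simp only
      congr 1
      rw [show s + 2*π + φ = (s + φ) + 2*π by ring, Real.cos_add_two_pi]
    have h4 : ∫ y in (0:ℝ)..((m:ℝ)*(2*π)), |Real.cos (y + φ)|
        = (m:ℤ) • ∫ y in (0:ℝ)..(2*π), |Real.cos (y + φ)| := by
      have h5 := hper2.intervalIntegral_add_zsmul_eq (m:ℤ) 0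
        (fun t₁ t₂ => (by continuity : Continuous fun y => |Real.cos (y + φ)|).intervalIntegrable _ _)
      rw [show (0:ℝ) + (m:ℤ) • (2*π) = (m:ℝ)*(2*π) by rw [zsmul_eq_mul]; push_cast; ring, zero_add] at h5
      rw [h5]
    rw [h4, abs_cos_shift]
    rw [zsmul_eq_mul, smul_eq_mul]
    push_cast
    field_simp
  rw [h3, zsmul_eq_mul]
  push_cast
  ring

set_option maxHeartbeats 2000000 in
lemma key (m : ℕ) (hm : 0 < m) (X X' X'' H q : ℝ → ℝ)
    (hX' : ∀ t, HasDerivAt X (X' t) t) (hX'' : ∀ t, HasDerivAt X' (X'' t) t)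
    (hHcont : Continuous H) (hq : Continuous q) (hqper : Function.Periodic q (2*π))
    (c δ : ℝ) (hδ : ∀ t, |H t - c| ≤ δ)
    (hsol : ∀ t, X'' t = q t - (m:ℝ)^2 * X t - H t)
    (hres : 4*δ < ‖∫ t in (0:ℝ)..(2*π),
      (q t : ℂ) * Complex.exp (Complex.I * (m:ℂ) * (t:ℂ))‖) :
    Tendsto (fun t => (X t)^2 + (X' t)^2) (cocompact ℝ) atTop := by
  set μ : ℂ := (m:ℂ) with hμ
  set e : ℝ → ℂ := fun s => Complex.exp (Complex.I * μ * s) with he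
  set F : ℝ → ℂ := fun t => ((X' t : ℂ) - Complex.I * μ * (X t : ℂ)) * e t with hF
  have hecont : Continuous e := by fun_prop
  have heabs : ∀ s, ‖e s‖ = 1 := by
    intro s
    simp only [he, Complex.norm_exp]
    norm_num [Complex.mul_re, hμ]
  have hFderiv : ∀ t, HasDerivAt F (e t * ((q t : ℂ) - (H t : ℂ))) t := by
    intro t
    have hcast : HasDerivAt (fun s : ℝ => (s:ℂ)) 1 t := by
      simpa using (hasDerivAt_id t).ofReal_comp
    have hee : HasDerivAt e (Complex.I * μ * e t) t := by
      have h1 : HasDerivAt (fun s : ℝ => Complex.I * μ * (s:ℂ)) (Complex.I * μ) t := by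
        simpa using hcast.const_mul (Complex.I * μ)
      simpa [he, mul_comm] using h1.cexp
    have hz : HasDerivAt (fun t => ((X' t : ℂ) - Complex.I * μ * (X t : ℂ)))
        ((X'' t : ℂ) - Complex.I * μ * (X' t : ℂ)) t := by
      exact ((hX'' t).ofReal_comp).sub (((hX' t).ofReal_comp).const_mul (Complex.I * μ))
    have := hz.mul hee
    refine this.congr_deriv ?_
    have hs : (X'' t : ℂ) = (q t : ℂ) - μ^2 * (X t : ℂ) - (H t : ℂ) := by
      rw [hsol t]; push_cast [hμ]; ring
    rw [hs]
    ring_nf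
    rw [Complex.I_sq]
    ring
  have hGcont : Continuous fun s => e s * ((q s : ℂ) - (H s : ℂ)) := by
    apply hecont.mul
    exact (Complex.continuous_ofReal.comp hq).sub (Complex.continuous_ofReal.comp hHcont)
  have hFTC : ∀ a b : ℝ, F b - F a = ∫ s in a..b, e s * ((q s : ℂ) - (H s : ℂ)) :=
    fun a b => (intervalIntegral.integral_eq_sub_of_hasDerivAt
      (fun t _ => hFderiv t) (hGcont.intervalIntegrable a b)).symm
  set Q : ℂ := ∫ s in (0:ℝ)..(2*π), e s * (q s : ℂ) with hQ
  have hQP : Q = ∫ t in (0:ℝ)..(2*π), (q t : ℂ) * Complex.exp (Complex.I * μ * (t:ℂ)) := by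
    apply intervalIntegral.integral_congr
    intro s _
    simp only [he, mul_comm]
  set A : ℝ := ‖Q‖ with hA
  have hres' : 4*δ < A := by rw [hA, hQP]; exact hres
  have hδ0 : 0 ≤ δ := le_trans (abs_nonneg _) (hδ 0)
  have hA0 : 0 < A := lt_of_le_of_lt (by linarith) hres'
  set θ : ℝ := -Complex.arg Q with hθ
  set W : ℂ := Complex.exp ((θ:ℂ) * Complex.I) with hW
  have hWQ : W * Q = (A:ℂ) := by
    have h2 : W * Complex.exp ((Complex.arg Q : ℂ) * Complex.I) = 1 := by
      rw [hW, ← Complex.exp_add,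
        show ((θ:ℝ):ℂ) * Complex.I + (Complex.arg Q : ℂ) * Complex.I = 0 from by
          rw [hθ]; push_cast; ring,
        Complex.exp_zero]
    calc W * Q = W * ((‖Q‖ : ℂ) * Complex.exp ((Complex.arg Q : ℂ) * Complex.I)) := by
          rw [Complex.norm_mul_exp_arg_mul_I]
      _ = (‖Q‖ : ℂ) * (W * Complex.exp ((Complex.arg Q : ℂ) * Complex.I)) := by ring
      _ = (A:ℂ) := by rw [h2, mul_one]
  have hWe : ∀ s : ℝ, (W * e s).re = Real.cos ((m:ℝ)*s + θ) := by
    intro s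
    have : W * e s = Complex.exp ((((m:ℝ)*s + θ : ℝ):ℂ) * Complex.I) := by
      rw [hW, he, ← Complex.exp_add]
      congr 1
      push_cast [hμ]
      ring
    rw [this, Complex.exp_ofReal_mul_I_re]
  -- periodicity of e * q
  have heqper : Function.Periodic (fun s : ℝ => e s * (q s : ℂ)) (2*π) := by
    intro s
    simp only [he, hqper s]
    congr 1
    rw [show Complex.I * μ * ((s:ℝ) + 2*π : ℝ) = Complex.I * μ * s + (m:ℤ) * (2*π*Complex.I) from by
      push_cast [hμ]; ring, Complex.exp_add, Complex.exp_int_mul_two_pi_mul_I, mul_one]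
  have heqcont : Continuous fun s : ℝ => e s * (q s : ℂ) :=
    hecont.mul (Complex.continuous_ofReal.comp hq)
  have hehcont : Continuous fun s : ℝ => e s * ((H s - c : ℝ) : ℂ) :=
    hecont.mul (Complex.continuous_ofReal.comp (hHcont.sub continuous_const))
  have hper : ∀ (t₀ : ℝ) (K : ℕ), ∫ s in t₀..(t₀ + (K:ℝ)*(2*π)), e s * (q s : ℂ) = (K:ℂ) * Q := by
    intro t₀ K
    have h1 := heqper.intervalIntegral_add_zsmul_eq (K:ℤ) t₀
      (fun t₁ t₂ => heqcont.intervalIntegrable t₁ t₂)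
    rw [show t₀ + (K:ℤ) • (2*π) = t₀ + (K:ℝ)*(2*π) from by rw [zsmul_eq_mul]; push_cast; ring] at h1
    rw [h1, heqper.intervalIntegral_add_eq t₀ 0, zero_add, ← hQ, zsmul_eq_mul]
    push_cast
    ring
  have hzero : ∀ (t₀ : ℝ) (K : ℕ), ∫ s in t₀..(t₀ + (K:ℝ)*(2*π)), e s * (c:ℂ) = 0 := by
    intro t₀ K
    have hc : Complex.I * μ ≠ 0 := by
      simp [hμ, Complex.I_ne_zero, Nat.cast_ne_zero, hm.ne']
    have hE : ∫ s in t₀..(t₀ + (K:ℝ)*(2*π)), e s = 0 := by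
      simp only [he]
      rw [integral_exp_mul_complex hc]
      rw [show Complex.I * μ * ((t₀ + (K:ℝ)*(2*π) : ℝ):ℂ)
          = Complex.I * μ * t₀ + ((K*m : ℕ):ℤ) * (2*π*Complex.I) from by push_cast [hμ]; ring,
        Complex.exp_add, Complex.exp_int_mul_two_pi_mul_I, mul_one, sub_self, zero_div]
    calc ∫ s in t₀..(t₀ + (K:ℝ)*(2*π)), e s * (c:ℂ)
        = ∫ s in t₀..(t₀ + (K:ℝ)*(2*π)), (c:ℂ) * e s := by
          apply intervalIntegral.integral_congr; intro s _; ring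
      _ = (c:ℂ) * ∫ s in t₀..(t₀ + (K:ℝ)*(2*π)), e s := intervalIntegral.integral_const_mul _ _
      _ = 0 := by rw [hE, mul_zero]
  have hsplit : ∀ (t₀ : ℝ) (K : ℕ), F (t₀ + (K:ℝ)*(2*π)) - F t₀
      = (K:ℂ) * Q - ∫ s in t₀..(t₀ + (K:ℝ)*(2*π)), e s * ((H s - c : ℝ):ℂ) := by
    intro t₀ K
    rw [hFTC]
    have hpt : ∀ s ∈ Set.uIcc t₀ (t₀ + (K:ℝ)*(2*π)), e s * ((q s:ℂ) - (H s:ℂ))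
        = (e s * (q s:ℂ) - e s * (c:ℂ)) - e s * ((H s - c : ℝ):ℂ) := by
      intro s _; push_cast; ring
    rw [intervalIntegral.integral_congr hpt,
      intervalIntegral.integral_sub (f := fun s => e s * (q s:ℂ) - e s * (c:ℂ))
        (g := fun s => e s * ((H s - c : ℝ):ℂ))
        ((heqcont.sub (hecont.mul continuous_const)).intervalIntegrable _ _)
        (hehcont.intervalIntegrable _ _),
      intervalIntegral.integral_sub (f := fun s => e s * (q s:ℂ)) (g := fun s => e s * (c:ℂ))
        (heqcont.intervalIntegrable _ _)
        ((hecont.mul continuous_const).intervalIntegrable _ _),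
      hper, hzero, sub_zero]
  have habsW : ‖W‖ = 1 := by
    rw [hW]; exact Complex.norm_exp_ofReal_mul_I θ
  have hTHre : ∀ (t₀ : ℝ) (K : ℕ),
      (W * ∫ s in t₀..(t₀ + (K:ℝ)*(2*π)), e s * ((H s - c : ℝ):ℂ)).re ≤ δ * (4*K) := by
    intro t₀ K
    have hcoscont : Continuous fun s : ℝ => |Real.cos ((m:ℝ)*s + θ)| :=
      (Real.continuous_cos.comp ((continuous_const.mul continuous_id).add continuous_const)).abs
    have hab : t₀ ≤ t₀ + (K:ℝ)*(2*π) := by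
      have : (0:ℝ) ≤ (K:ℝ)*(2*π) := by positivity
      linarith
    have h1 : W * (∫ s in t₀..(t₀ + (K:ℝ)*(2*π)), e s * ((H s - c : ℝ):ℂ))
        = ∫ s in t₀..(t₀ + (K:ℝ)*(2*π)), W * (e s * ((H s - c : ℝ):ℂ)) :=
      (intervalIntegral.integral_const_mul _ _).symm
    have hWHcont : Continuous fun s : ℝ => W * (e s * ((H s - c : ℝ):ℂ)) :=
      continuous_const.mul hehcont
    have h2 := Complex.reCLM.intervalIntegral_comp_comm (μ := volume)
      (a := t₀) (b := t₀ + (K:ℝ)*(2*π)) (hWHcont.intervalIntegrable _ _)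
    simp only [Complex.reCLM_apply] at h2
    rw [h1, ← h2]
    have hpt2 : ∀ s : ℝ, (W * (e s * ((H s - c : ℝ):ℂ))).re
        = (H s - c) * Real.cos ((m:ℝ)*s + θ) := by
      intro s
      have : W * (e s * ((H s - c : ℝ):ℂ)) = (W * e s) * ((H s - c : ℝ):ℂ) := by ring
      rw [this]
      simp [Complex.mul_re, hWe s]
      ring
    calc (∫ s in t₀..(t₀ + (K:ℝ)*(2*π)), (W * (e s * ((H s - c : ℝ):ℂ))).re)
        ≤ ∫ s in t₀..(t₀ + (K:ℝ)*(2*π)), δ * |Real.cos ((m:ℝ)*s + θ)| := by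
          apply intervalIntegral.integral_mono_on hab
          · exact ((Complex.continuous_re.comp hWHcont).intervalIntegrable _ _)
          · exact ((continuous_const.mul hcoscont).intervalIntegrable _ _)
          · intro s _
            rw [hpt2 s]
            calc (H s - c) * Real.cos ((m:ℝ)*s + θ)
                ≤ |(H s - c) * Real.cos ((m:ℝ)*s + θ)| := le_abs_self _
              _ = |H s - c| * |Real.cos ((m:ℝ)*s + θ)| := abs_mul _ _
              _ ≤ δ * |Real.cos ((m:ℝ)*s + θ)| :=
                  mul_le_mul_of_nonneg_right (hδ s) (abs_nonneg _)
      _ = δ * (4*K) := by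
          rw [intervalIntegral.integral_const_mul, abs_cos_per m hm θ t₀ K]
  have hmain : ∀ (t₀ : ℝ) (K : ℕ), (K:ℝ) * (A - 4*δ)
      ≤ ‖F (t₀ + (K:ℝ)*(2*π))‖ + ‖F t₀‖ := by
    intro t₀ K
    have h1 : (W * (F (t₀ + (K:ℝ)*(2*π)) - F t₀)).re
        = (K:ℝ)*A - (W * ∫ s in t₀..(t₀ + (K:ℝ)*(2*π)), e s * ((H s - c : ℝ):ℂ)).re := by
      rw [hsplit t₀ K, mul_sub, show W * ((K:ℂ) * Q) = (K:ℂ) * (W * Q) from by ring, hWQ,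
        show (K:ℂ) * (A:ℂ) = (((K:ℝ)*A : ℝ):ℂ) from by push_cast; ring]
      rw [Complex.sub_re, Complex.ofReal_re]
    have h2 : (W * (F (t₀ + (K:ℝ)*(2*π)) - F t₀)).re
        ≤ ‖F (t₀ + (K:ℝ)*(2*π))‖ + ‖F t₀‖ := by
      calc (W * (F (t₀ + (K:ℝ)*(2*π)) - F t₀)).re
          ≤ ‖W * (F (t₀ + (K:ℝ)*(2*π)) - F t₀)‖ := Complex.re_le_norm _
        _ = ‖F (t₀ + (K:ℝ)*(2*π)) - F t₀‖ := by
            rw [norm_mul, habsW, one_mul]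
        _ ≤ ‖F (t₀ + (K:ℝ)*(2*π))‖ + ‖F t₀‖ := by
            exact (norm_sub_le _ _)
    have h3 := hTHre t₀ K
    nlinarith [h1, h2, h3]
  clear_value W θ A Q
  have hFcont : Continuous F := by
    have hd : Differentiable ℝ F := fun t => (hFderiv t).differentiableAt
    exact hd.continuous
  obtain ⟨B, hB⟩ := (isCompact_Icc (a := (0:ℝ)) (b := 2*π)).exists_bound_of_continuousOn
    hFcont.continuousOn
  have hπ : (0:ℝ) < 2*π := by positivity
  set ε : ℝ := A - 4*δ with hε
  have hε0 : 0 < ε := by rw [hε]; linarith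
  clear_value ε
  have hB0 : 0 ≤ B := le_trans (norm_nonneg (F 0)) (hB 0 ⟨le_refl 0, by positivity⟩)
  have hlow : ∀ t : ℝ, (Nat.floor (|t|/(2*π)) : ℝ) * ε - B ≤ ‖F t‖ := by
    intro t
    set K := Nat.floor (|t|/(2*π)) with hK
    have hKle : (K:ℝ) * (2*π) ≤ |t| := by
      have h0 := Nat.floor_le (by positivity : (0:ℝ) ≤ |t|/(2*π))
      calc (K:ℝ)*(2*π) ≤ (|t|/(2*π))*(2*π) := by nlinarith
        _ = |t| := by field_simp
    have hKgt : |t| < ((K:ℝ)+1)*(2*π) := by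
      have h0 := Nat.lt_floor_add_one (|t|/(2*π))
      calc |t| = (|t|/(2*π))*(2*π) := by field_simp
        _ < ((K:ℝ)+1)*(2*π) := by nlinarith
    rcases le_or_gt 0 t with ht|ht
    · rw [abs_of_nonneg ht] at hKle hKgt
      have h1 := hmain (t - (K:ℝ)*(2*π)) K
      rw [show t - (K:ℝ)*(2*π) + (K:ℝ)*(2*π) = t from by ring] at h1
      have h3 : ‖F (t - (K:ℝ)*(2*π))‖ ≤ B := by
        have := hB (t - (K:ℝ)*(2*π)) ⟨by linarith, by nlinarith⟩
        simpa using this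
      linarith
    · rw [abs_of_neg ht] at hKle hKgt
      have h1 := hmain t (K+1)
      have hmem : t + ((K+1:ℕ):ℝ)*(2*π) ∈ Set.Icc (0:ℝ) (2*π) := by
        push_cast
        constructor
        · nlinarith
        · nlinarith
      have h3 : ‖F (t + ((K+1:ℕ):ℝ)*(2*π))‖ ≤ B := by
        simpa using hB _ hmem
      push_cast at h1 h3
      nlinarith
  have habsF : ∀ t, (‖F t‖)^2 = (X' t)^2 + (m:ℝ)^2*(X t)^2 := by
    intro t
    have h1 : F t = ((X' t : ℂ) - Complex.I*μ*(X t:ℂ)) * e t := rfl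
    have h2 : ‖F t‖ = ‖(X' t : ℂ) - Complex.I*μ*(X t:ℂ)‖ := by
      rw [h1, norm_mul, heabs, mul_one]
    have h3 : ((X' t : ℂ) - Complex.I*μ*(X t:ℂ)).re = X' t := by simp [hμ]
    have h4 : ((X' t : ℂ) - Complex.I*μ*(X t:ℂ)).im = -((m:ℝ) * X t) := by simp [hμ]
    rw [h2, Complex.sq_norm, Complex.normSq_apply, h3, h4]
    ring
  have hm1 : (1:ℝ) ≤ (m:ℝ) := by exact_mod_cast hm
  clear_value F e μ
  rw [Filter.tendsto_atTop]
  intro b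
  set L : ℝ := max b 1 with hL
  have hL1 : (1:ℝ) ≤ L := le_max_right _ _
  have hLb : b ≤ L := le_max_left _ _
  clear_value L
  set N : ℕ := Nat.ceil ((B + (m:ℝ)^2*L)/ε) with hN
  have hNε : B + (m:ℝ)^2*L ≤ (N:ℝ)*ε := by
    have h0 := Nat.le_ceil ((B + (m:ℝ)^2*L)/ε)
    rw [← hN] at h0
    calc B + (m:ℝ)^2*L = ((B + (m:ℝ)^2*L)/ε)*ε := by field_simp
      _ ≤ (N:ℝ)*ε := mul_le_mul_of_nonneg_right h0 hε0.le
  clear_value N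
  have hev : ∀ᶠ t in cocompact ℝ, ((N:ℝ)+1)*(2*π) ≤ |t| := by
    rw [cocompact_eq_atBot_atTop, eventually_sup]
    constructor
    · filter_upwards [eventually_le_atBot (-(((N:ℝ)+1)*(2*π)))] with y hy
      have : 0 ≤ ((N:ℝ)+1)*(2*π) := by positivity
      rw [abs_of_nonpos (by linarith)]
      linarith
    · filter_upwards [eventually_ge_atTop (((N:ℝ)+1)*(2*π))] with y hy
      have : 0 ≤ ((N:ℝ)+1)*(2*π) := by positivity
      rw [abs_of_nonneg (by linarith)]
      exact hy
  clear hδ hsol hres hμ he hF hecont heabs hFderiv hGcont hFTC hQ hQP hA hres' hδ0 hA0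
  clear hθ hW hWQ hWe heqper heqcont hehcont hper hzero hsplit habsW hTHre hFcont hB hmain hε
  clear hq hHcont hqper hX' hX''
  filter_upwards [hev] with t ht
  have hKN : (N:ℝ) ≤ (Nat.floor (|t|/(2*π)) : ℝ) := by
    have h0 : (N:ℝ) ≤ |t|/(2*π) := by
      rw [le_div_iff₀ hπ]
      linarith
    exact_mod_cast Nat.le_floor (by exact_mod_cast h0)
  have h1 : (m:ℝ)^2 * L ≤ ‖F t‖ := by
    have h2 := hlow t
    have h4 : (N:ℝ)*ε ≤ (Nat.floor (|t|/(2*π)) : ℝ) * ε :=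
      mul_le_mul_of_nonneg_right hKN hε0.le
    linarith
  have h2 := habsF t
  have hmL : 0 ≤ (m:ℝ)^2*L := by positivity
  have h3 : ((m:ℝ)^2*L)^2 ≤ (‖F t‖)^2 := pow_le_pow_left₀ hmL h1 2
  have hm2 : (1:ℝ) ≤ (m:ℝ)^2 := by nlinarith [hm1]
  have hm2p : (0:ℝ) < (m:ℝ)^2 := by positivity
  have h5 : ((m:ℝ)^2*L)^2 ≤ (m:ℝ)^2 * ((X t)^2 + (X' t)^2) := by
    nlinarith [h3, h2, sq_nonneg (X' t), sq_nonneg (X t),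
      mul_nonneg (by linarith : (0:ℝ) ≤ (m:ℝ)^2 - 1) (sq_nonneg (X' t))]
  have h8 : (m:ℝ)^2 * L^2 ≤ ((m:ℝ)^2*L)^2 := by nlinarith [hm2, sq_nonneg L]
  have h9 : (m:ℝ)^2 * L^2 ≤ (m:ℝ)^2 * ((X t)^2 + (X' t)^2) := le_trans h8 h5
  have h7 : L^2 ≤ (X t)^2 + (X' t)^2 := le_of_mul_le_mul_left h9 hm2p
  have hLL : L ≤ L^2 := by nlinarith [hL1]
  linarith


/-- Consider the system `x_j'' + n_j² x_j + h_j(x₁,…,x_d) = p_j(t)`, `j = 1,…,d`, with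
`n_j > 0`, `h_j` locally Lipschitz and bounded, `p_j` continuous and `2π`-periodic.
If for every index `j` one has `n_j ∈ ℕ` and
`2 (sup h_j - inf h_j) < |∫₀^{2π} p_j(t) e^{i n_j t} dt|`, then for every `j`
every solution satisfies `x_j(t)² + x_j'(t)² → +∞` as `|t| → +∞`. -/
theorem all_components_unbounded_of_global_condition
    (d : ℕ) (n : Fin d → ℝ) (h : Fin d → (Fin d → ℝ) → ℝ) (p : Fin d → ℝ → ℝ)
    (hn : ∀ j, 0 < n j)
    (hLip : ∀ j, LocallyLipschitz (h j))
    (hbd : ∀ j, ∃ M, ∀ y, |h j y| ≤ M)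
    (hp : ∀ j, Continuous (p j))
    (hper : ∀ j, Function.Periodic (p j) (2 * Real.pi))
    (x x' x'' : Fin d → ℝ → ℝ)
    (hx' : ∀ j t, HasDerivAt (x j) (x' j t) t)
    (hx'' : ∀ j t, HasDerivAt (x' j) (x'' j t) t)
    (hsol : ∀ j t, x'' j t + (n j) ^ 2 * x j t + h j (fun i => x i t) = p j t)
    (hnat : ∀ j, ∃ m : ℕ, 0 < m ∧ n j = (m : ℝ))
    (hres : ∀ j, 2 * ((⨆ y, h j y) - (⨅ y, h j y)) <
      ‖∫ t in (0 : ℝ)..(2 * Real.pi),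
        (p j t : ℂ) * Complex.exp (Complex.I * (n j : ℂ) * (t : ℂ))‖) :
    ∀ j, Tendsto (fun t => (x j t) ^ 2 + (x' j t) ^ 2) (cocompact ℝ) atTop := by
  intro j
  obtain ⟨m, hm, hnm⟩ := hnat j
  obtain ⟨M, hM⟩ := hbd j
  have hbdda : BddAbove (Set.range (h j)) :=
    ⟨M, by rintro _ ⟨y, rfl⟩; exact (abs_le.1 (hM y)).2⟩
  have hbddb : BddBelow (Set.range (h j)) :=
    ⟨-M, by rintro _ ⟨y, rfl⟩; exact (abs_le.1 (hM y)).1⟩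
  have hS : ∀ y, h j y ≤ ⨆ y, h j y := fun y => le_ciSup hbdda y
  have hI : ∀ y, (⨅ y, h j y) ≤ h j y := fun y => ciInf_le hbddb y
  have hXc : ∀ i, Continuous (x i) := fun i => by
    have : Differentiable ℝ (x i) := fun t => (hx' i t).differentiableAt
    exact this.continuous
  have hHcont : Continuous (fun t => h j (fun i => x i t)) :=
    (hLip j).continuous.comp (continuous_pi fun i => hXc i)
  have hres' : 4 * (((⨆ y, h j y) - ⨅ y, h j y)/2) <
      ‖∫ t in (0:ℝ)..(2*π),
        (p j t : ℂ) * Complex.exp (Complex.I * (m:ℂ) * (t:ℂ))‖ := by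
    have h0 := hres j
    rw [hnm] at h0
    simp only [Complex.ofReal_natCast] at h0
    rw [show (4:ℝ) * (((⨆ y, h j y) - ⨅ y, h j y)/2) = 2 * ((⨆ y, h j y) - ⨅ y, h j y) from by
      ring]
    exact h0
  exact key m hm (x j) (x' j) (x'' j) (fun t => h j (fun i => x i t)) (p j)
    (hx' j) (hx'' j) hHcont (hp j) (hper j)
    (((⨆ y, h j y) + ⨅ y, h j y)/2) (((⨆ y, h j y) - ⨅ y, h j y)/2)
    (fun t => abs_le.2 ⟨by linarith [hI (fun i => x i t)], by linarith [hS (fun i => x i t)]⟩)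
    (fun t => by have := hsol j t; rw [hnm] at this; linarith)
    hres'
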